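/- For every nonempty string V over Σ_$ and all i, j ∈ [1..|V|], rtsenc(rot(V,i))[j] = rot(rtsenc(V), i)[j]; in other words, the rotational Cartesian tree signature encoding commutes with left rotation: rtsenc(rot(V,i)) = rot(rtsenc(V), i). -/
import Mathlib


open Classical

/-- Unlabeled binary trees, representing the shapes of Cartesian trees
(Cartesian tree matching compares tree structure). -/
inductive CTree : Type where
  | leaf : CTree
  | node : CTree → CTree → CTree
  deriving DecidableEq

noncomputable section

/-- The alphabet `Σ_$`: the integer alphabet `Σ = {0,…,σ}` together with the
special symbol `$ = ⊥`, which is smaller than every symbol of `Σ`. -/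
abbrev Sig (σ : ℕ) := WithBot (Fin (σ + 1))

/-- The encoding alphabet `Σ_$ ∪ ℕ ∪ {∞}`: `$ = ⊥`, naturals, and `∞ = ⊤`. -/
abbrev Enc := WithBot (WithTop ℕ)

/-- The symbol `∞`, larger than every integer. -/
def infE : Enc := ((⊤ : WithTop ℕ) : Enc)

variable {σ : ℕ}

/-- 1-based access, defaulting to `$`. -/
def get1 (V : List (Sig σ)) (i : ℕ) : Sig σ := V.getD (i - 1) ⊥

/-- Parent distance encoding: entry at 1-based position `i`:
`∞` if `$ ≠ V[i] < V[j]` for all `j < i`; `$` if `V[i] = $`;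
otherwise `i − max{ j ∈ [1..i−1] : V[j] < V[i] }`. -/
def pdEntry (V : List (Sig σ)) (i : ℕ) : Enc :=
  if get1 V i = ⊥ then ⊥
  else if ∀ j, 1 ≤ j → j < i → get1 V i < get1 V j then infE
  else (((i - Nat.findGreatest (fun j => 1 ≤ j ∧ get1 V j < get1 V i) (i - 1) : ℕ) : WithTop ℕ) : Enc)

/-- The parent distance encoding `pd(V)`. -/
def pd (V : List (Sig σ)) : List Enc := (List.range V.length).map fun k => pdEntry V (k + 1)

/-- 0-based position of the leftmost minimum symbol. -/
def minPos (V : List (Sig σ)) : ℕ := V.findIdx fun c => V.all fun d => decide (c ≤ d)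

def ctAux : ℕ → List (Sig σ) → CTree
  | 0, _ => .leaf
  | fuel + 1, V =>
    if V.isEmpty then .leaf
    else .node (ctAux fuel (V.take (minPos V))) (ctAux fuel (V.drop (minPos V + 1)))

/-- The Cartesian tree `CT(V)`: root at the position of the smallest symbol
(ties broken towards the smallest position), recursing on both sides. -/
def ct (V : List (Sig σ)) : CTree := ctAux V.length V

/-- Cartesian tree matching: `U ≈ V` iff `CT(U) = CT(V)`. -/
def CtMatch (U V : List (Sig σ)) : Prop := ct U = ct V

/-- `k`-fold concatenation `Y^k`. -/
def listPow {α : Type*} : List α → ℕ → List α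
  | _, 0 => []
  | Y, k + 1 => Y ++ listPow Y k

/-- A string is primitive if `X = Y^k` implies `Y = X` and `k = 1`. -/
def Primitive {α : Type*} (X : List α) : Prop := ∀ Y k, X = listPow Y k → Y = X ∧ k = 1

/-- The primitive root `root(U)` of a string. -/
def proot {α : Type*} (U : List α) : List α :=
  if h : ∃ Y, Primitive Y ∧ ∃ k, 1 ≤ k ∧ U = listPow Y k then h.choose else U

/-- `V^ω[..i]`, the length-`i` prefix of the infinite self-concatenation of `V`. -/
def wpre {α : Type*} (V : List α) (i : ℕ) : List α := (listPow V i).take i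

/-- One left rotation. -/
def rotOne {α : Type*} (V : List α) : List α := V.drop 1 ++ V.take 1

/-- `rot(V,k)`, the `k`-th left rotation of `V`. -/
def rot {α : Type*} (V : List α) (k : ℕ) : List α := rotOne^[k] V

/-- Rotational parent distance encoding: `rpd(V) = pd(V·V)[|V|+1..]`. -/
def rpd (V : List (Sig σ)) : List Enc := (pd (V ++ V)).drop V.length

/-- The ω-preorder: `V ⪯ω U` iff there is `i` with `pd(V^ω[..i]) < pd(U^ω[..i])`
(lexicographically, with a proper prefix smaller), or `root(rpd V) = root(rpd U)`. -/
def omegaLe (V U : List (Sig σ)) : Prop :=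
  (∃ i : ℕ, List.Lex (· < ·) (pd (wpre V i)) (pd (wpre U i))) ∨ proot (rpd V) = proot (rpd U)

/-- `V =ω U`. -/
def omegaEq (V U : List (Sig σ)) : Prop := omegaLe V U ∧ omegaLe U V

/-- `V ≺ω U`. -/
def omegaLt (V U : List (Sig σ)) : Prop := omegaLe V U ∧ ¬ omegaEq V U

/-- Entry of the rotational Cartesian tree signature encoding at 1-based position `i`. -/
def rtsEntry (V : List (Sig σ)) (i : ℕ) : WithBot ℕ :=
  if get1 V i = ⊥ then ⊥
  else (((pd (rot V i)).count infE - ((pd (get1 V i :: rot V i)).drop 1).count infE : ℕ) : WithBot ℕ)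

/-- The rotational Cartesian tree signature encoding `rtsenc(V)`. -/
def rtsenc (V : List (Sig σ)) : List (WithBot ℕ) :=
  (List.range V.length).map fun k => rtsEntry V (k + 1)

/-- `π(V) = rtsenc(V)[1]`. -/
def piF (V : List (Sig σ)) : WithBot ℕ := (rtsenc V).getD 0 ⊥

/-- Length of the longest common prefix of two strings. -/
def lcpLen {α : Type*} [DecidableEq α] : List α → List α → ℕ
  | a :: as, b :: bs => if a = b then lcpLen as bs + 1 else 0
  | _, _ => 0

/-- `lcp∞(U,W)`: the number of occurrences of `∞` among the first `ℓ` symbols of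
`pd(U)`, where `ℓ` is the length of the longest common prefix of `pd U` and `pd W`. -/
def lcpInf (U W : List (Sig σ)) : ℕ := ((pd U).take (lcpLen (pd U) (pd W))).count infE

/-- Total length `n = |T_1 ⋯ T_d|` of all texts. -/
def totLen (Ts : List (List (Sig σ))) : ℕ := (Ts.map List.length).sum

/-- `conj_𝒯(i)` for `i ∈ [1..n]`: with `j = min{h : n_1+⋯+n_h ≥ i}`,
the rotation `rot(T_j, i − 1 − (n_1+⋯+n_{j−1}))`. -/
def conjAt : List (List (Sig σ)) → ℕ → List (Sig σ)
  | [], _ => []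
  | T :: Ts, i => if i ≤ T.length then rot T (i - 1) else conjAt Ts (i - T.length)

/-- The text `T_j` containing global position `i`. -/
def textAt : List (List (Sig σ)) → ℕ → List (Sig σ)
  | [], _ => []
  | T :: Ts, i => if i ≤ T.length then T else textAt Ts (i - T.length)

/-- `prev_𝒯(i)`. -/
def prevT (Ts : List (List (Sig σ))) (i : ℕ) : ℕ :=
  if omegaEq (conjAt Ts i) (textAt Ts i) then i - 1 + (proot (rpd (textAt Ts i))).length
  else i - 1

/-- `CA` is the conjugate array of the texts `Ts`: a permutation of `[1..n]` with
`CA[i] = j` iff `i − 1` equals the number of `k ∈ [1..n]` with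
`conj(k) ≺ω conj(j)`, or `conj(k) =ω conj(j)` and `k < j`. -/
def IsCA (Ts : List (List (Sig σ))) (CA : ℕ → ℕ) : Prop :=
  Set.BijOn CA (Set.Icc 1 (totLen Ts)) (Set.Icc 1 (totLen Ts)) ∧
  ∀ i ∈ Set.Icc 1 (totLen Ts), ∀ j ∈ Set.Icc 1 (totLen Ts),
    (CA i = j ↔ i - 1 = Set.ncard {k | k ∈ Set.Icc 1 (totLen Ts) ∧
      (omegaLt (conjAt Ts k) (conjAt Ts j) ∨ (omegaEq (conjAt Ts k) (conjAt Ts j) ∧ k < j))})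

/-- The conjugate range of `P`: positions `i ∈ [1..n]` with
`P ≈ conj(CA[i])^ω[..|P|]`. -/
def crange (Ts : List (List (Sig σ))) (CA : ℕ → ℕ) (P : List (Sig σ)) : Set ℕ :=
  {i | i ∈ Set.Icc 1 (totLen Ts) ∧ CtMatch P (wpre (conjAt Ts (CA i)) P.length)}

/-- `rank_c(V, j)`: number of occurrences of `c` in `V[..j]`. -/
def rankQ {α : Type*} [DecidableEq α] (c : α) (V : List α) (j : ℕ) : ℕ := (V.take j).count c

/-- `select_c(V, i)`: 1-based position of the `i`-th occurrence of `c` in `V`. -/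
def selectQ {α : Type*} [DecidableEq α] (c : α) (V : List α) (i : ℕ) : ℕ :=
  ((List.range V.length).findIdx fun k => (V.take (k + 1)).count c == i) + 1

end

lemma rotOne_eq_rotate {α : Type*} (V : List α) : rotOne V = V.rotate 1 := by
  cases V with
  | nil => simp [rotOne]
  | cons a l => simp [rotOne, List.rotate_cons_succ]

lemma rot_eq_rotate {α : Type*} (V : List α) (k : ℕ) : rot V k = V.rotate k := by
  induction k with
  | zero => simp [rot]
  | succ n ih =>
    rw [rot, Function.iterate_succ_apply', ← rot, ih, rotOne_eq_rotate,
      List.rotate_rotate]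

lemma rot_rot {α : Type*} (V : List α) (i j : ℕ) : rot (rot V i) j = rot V (i + j) := by
  simp [rot, add_comm i j, Function.iterate_add_apply]

lemma length_rtsenc (V : List (Sig σ)) : (rtsenc V).length = V.length := by
  simp [rtsenc]

lemma rtsEntry_rot (V : List (Sig σ)) (hV : V ≠ []) (i k : ℕ) (hk : k < V.length) :
    rtsEntry (rot V i) (k + 1) = rtsEntry V ((k + i) % V.length + 1) := by
  have hn : 0 < V.length := List.length_pos_iff.2 hV
  have hget : get1 (rot V i) (k + 1) = get1 V ((k + i) % V.length + 1) := by
    have h1 : k < (rot V i).length := by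
      rw [rot_eq_rotate, List.length_rotate]; exact hk
    have h2 : (k + i) % V.length < V.length := Nat.mod_lt _ hn
    simp only [get1, Nat.add_sub_cancel]
    rw [List.getD_eq_getElem _ _ h1, List.getD_eq_getElem _ _ h2]
    simp only [rot_eq_rotate, List.getElem_rotate]
  have hrot : rot (rot V i) (k + 1) = rot V ((k + i) % V.length + 1) := by
    have hm : (i + (k + 1)) % V.length = ((k + i) % V.length + 1) % V.length := by
      rw [show i + (k + 1) = (k + i) + 1 by omega]
      exact ((Nat.mod_modEq (k + i) V.length).add_right 1).symm
    rw [rot_rot, rot_eq_rotate, rot_eq_rotate, ← List.rotate_mod V (i + (k + 1)), hm,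
      List.rotate_mod]
  unfold rtsEntry
  rw [hget, hrot]

/-- For every nonempty string `V` over `Σ_$` and all
`i, j ∈ [1..|V|]`, `rtsenc(rot(V,i))[j] = rot(rtsenc(V), i)[j]`; in other words,
`rtsenc(rot(V,i)) = rot(rtsenc(V), i)`. -/
theorem rtsenc_rot_comm (σ : ℕ) (V : List (Sig σ)) (hV : V ≠ []) :
    ∀ i ∈ Set.Icc 1 V.length,
      (∀ j ∈ Set.Icc 1 V.length,
        (rtsenc (rot V i)).getD (j - 1) ⊥ = (rot (rtsenc V) i).getD (j - 1) ⊥) ∧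
      rtsenc (rot V i) = rot (rtsenc V) i := by
  intro i _
  have hn : 0 < V.length := List.length_pos_iff.2 hV
  have hlen1 : (rtsenc (rot V i)).length = V.length := by
    rw [length_rtsenc, rot_eq_rotate, List.length_rotate]
  have hlen2 : (rot (rtsenc V) i).length = V.length := by
    rw [rot_eq_rotate, List.length_rotate, length_rtsenc]
  have hmain : rtsenc (rot V i) = rot (rtsenc V) i := by
    apply List.ext_getElem (by rw [hlen1, hlen2])
    intro k h1 h2
    have hk : k < V.length := by rwa [hlen1] at h1
    have hk2 : k < (List.range (rot V i).length).length := by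
      simpa [rot_eq_rotate] using hk
    have lhs : (rtsenc (rot V i))[k] = rtsEntry (rot V i) (k + 1) := by
      simp [rtsenc, rot_eq_rotate, hk]
    have rhs : (rot (rtsenc V) i)[k]'h2 = rtsEntry V ((k + i) % V.length + 1) := by
      simp only [rot_eq_rotate]
      rw [List.getElem_rotate (rtsenc V) i k (by rwa [List.length_rotate, length_rtsenc])]
      have : (k + i) % (rtsenc V).length < (List.range V.length).length := by
        simpa [length_rtsenc] using Nat.mod_lt (k + i) hn
      simp [rtsenc, length_rtsenc, Nat.mod_lt (k + i) hn]
    rw [lhs, rhs, rtsEntry_rot V hV i k hk]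
  exact ⟨fun j _ => by rw [hmain], hmain⟩
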